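/- The map φ: E_{n−1}^{−1} → GL(2ⁿ, ℂ) sending xᵢ to gᵢ = I₂^{⊗(i−1)}⊗R²⊗I₂^{⊗(n−i−1)} is an injective group homomorphism; in particular the group generated by g₁,…,g_{n−1} is isomorphic to E_{n−1}^{−1} and has order 2ⁿ. -/

import Mathlib

open Matrix Complex

/-- The 4×4 matrix `R = (1/√2)·[[1,0,0,1],[0,1,-1,0],[0,1,1,0],[-1,0,0,1]]`. -/
noncomputable def R4 : Matrix (Fin 4) (Fin 4) ℂ :=
  ((Real.sqrt 2 : ℝ) : ℂ)⁻¹ • !![1, 0, 0, 1; 0, 1, -1, 0; 0, 1, 1, 0; -1, 0, 0, 1]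

/-- `R` as a matrix on `ℂ² ⊗ ℂ²`, indexed by pairs; `p.1` is the first tensor
factor (the paper's basis ordering makes the second factor the major index). -/
noncomputable def R : Matrix (Fin 2 × Fin 2) (Fin 2 × Fin 2) ℂ := fun p q =>
  R4 ⟨p.1.val + 2 * p.2.val, by have := p.1.isLt; have := p.2.isLt; omega⟩
     ⟨q.1.val + 2 * q.2.val, by have := q.1.isLt; have := q.2.isLt; omega⟩

/-- The operator `I₂^{⊗ i} ⊗ M ⊗ I₂^{⊗ (n-i-2)}` acting on `(ℂ²)^{⊗ n}`
(0-indexed: `M` acts on tensor factors `i` and `i+1`). -/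
noncomputable def pairOp (n i : ℕ) (M : Matrix (Fin 2 × Fin 2) (Fin 2 × Fin 2) ℂ) :
    Matrix (Fin n → Fin 2) (Fin n → Fin 2) ℂ :=
  if h : i + 1 < n then fun x y =>
    M (x ⟨i, Nat.lt_of_succ_lt h⟩, x ⟨i + 1, h⟩) (y ⟨i, Nat.lt_of_succ_lt h⟩, y ⟨i + 1, h⟩) *
      ∏ j : Fin n, if (j : ℕ) = i ∨ (j : ℕ) = i + 1 then 1 else if x j = y j then 1 else 0
  else 0

/-- `gMat n i = I₂^{⊗ i} ⊗ R² ⊗ I₂^{⊗ (n-i-2)}` (0-indexed: `gMat n i` is the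
paper's `g_{i+1}`, acting on tensor factors `i` and `i+1`). -/
noncomputable def gMat (n i : ℕ) : Matrix (Fin n → Fin 2) (Fin n → Fin 2) ℂ :=
  pairOp n i (R * R)

/-- Relators for the group `E_m^ν`: generators are `none` (the central element `-1`)
and `some i` (the generator `xᵢ`, 0-indexed); relations are `(-1)² = 1`, `-1` central,
`xᵢ² = ν`, far commutation `xᵢxⱼ = xⱼxᵢ` for `|i-j| ≥ 2`, and adjacent
anticommutation `x_{i+1}xᵢ = (-1)·xᵢx_{i+1}`. -/
def Erel (m : ℕ) (ν : ℤˣ) : Set (FreeGroup (Option (Fin m))) :=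
  {FreeGroup.of none ^ 2} ∪
    {r | ∃ i : Fin m, r = FreeGroup.of none * FreeGroup.of (some i) *
        (FreeGroup.of none)⁻¹ * (FreeGroup.of (some i))⁻¹} ∪
    {r | ∃ i : Fin m, r = FreeGroup.of (some i) ^ 2 *
        (if ν = 1 then 1 else FreeGroup.of none)⁻¹} ∪
    {r | ∃ i j : Fin m, (i : ℕ) + 2 ≤ (j : ℕ) ∧ r = FreeGroup.of (some i) *
        FreeGroup.of (some j) * (FreeGroup.of (some i))⁻¹ * (FreeGroup.of (some j))⁻¹} ∪
    {r | ∃ i j : Fin m, (j : ℕ) = (i : ℕ) + 1 ∧ r = FreeGroup.of (some j) *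
        FreeGroup.of (some i) *
        (FreeGroup.of none * FreeGroup.of (some i) * FreeGroup.of (some j))⁻¹}

/-- The group `E_m^ν`. -/
abbrev Egrp (m : ℕ) (ν : ℤˣ) := PresentedGroup (Erel m ν)

/-- The central element `-1` of `E_m^ν`. -/
def neg1 (m : ℕ) (ν : ℤˣ) : Egrp m ν := PresentedGroup.of none

/-- The generator `x_{i+1}` of `E_m^ν` (0-indexed: `xgen m ν i` is the paper's `x_{i+1}`). -/
def xgen (m : ℕ) (ν : ℤˣ) (i : Fin m) : Egrp m ν := PresentedGroup.of (some i)

/-!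
The images of the generators in `E_m^ν ⧸ ⟨-1⟩` are commuting involutions, so this quotient has
at most `2^m` elements and `|E_m^ν| ≤ 2^(m+1)`. For `ν = -1` the relations hold in the central
extension `CentralExt m` of `(ℤ/2)^m` by `ℤ/2` with cocycle `β(a, b) = ∑ⱼ (aⱼ + aⱼ₊₁) bⱼ`,
via `xᵢ ↦ (0, eᵢ)`; this group has exactly `2^(m+1)` elements and is generated by the images, so
`E_m^{-1} ≅ CentralExt m`. Finally `CentralExt (n-1)` acts faithfully on `ℂ^((ℤ/2)^n)` by signed
permutation matrices: `(s, a)` sends `e_y` to `±e_(y + Ba)` with `(Ba)ⱼ = aⱼ + aⱼ₋₁` injective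
in `a`, and `(0, eᵢ)` acts as `gᵢ` because `R²` flips both bits `yᵢ, yᵢ₊₁` with sign `(-1)^(1+yᵢ)`.
-/

theorem zmod_two_eq_zero_or_eq_one (s : ZMod 2) : s = 0 ∨ s = 1 := by
  revert s; decide

theorem pi_zmod_two_add_self {ι : Type*} (a : ι → ZMod 2) : a + a = 0 :=
  funext fun i => CharTwo.add_self_eq_zero (a i)

theorem neg_one_pow_val_add (s t : ZMod 2) :
    (-1 : ℂ) ^ (s + t).val = (-1) ^ s.val * (-1) ^ t.val := by
  rw [ZMod.val_add, ← neg_one_pow_eq_pow_mod_two, pow_add]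

theorem neg_one_pow_val_eq_one_iff (s : ZMod 2) : (-1 : ℂ) ^ s.val = 1 ↔ s = 0 := by
  rcases zmod_two_eq_zero_or_eq_one s with rfl | rfl <;> norm_num [ZMod.val_one]

def bondMatrix (k m : ℕ) : Matrix (Fin k) (Fin m) (ZMod 2) :=
  Matrix.of fun j i => if (j : ℕ) = i ∨ (j : ℕ) = i + 1 then 1 else 0

theorem bondMatrix_mulVec_single (k : ℕ) {m : ℕ} (i : Fin m) (j : Fin k) :
    (bondMatrix k m *ᵥ Pi.single i 1) j = if (j : ℕ) = i ∨ (j : ℕ) = i + 1 then 1 else 0 := by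
  rw [mulVec_single_one]; rfl

theorem bondMatrix_mulVec_injective {k m : ℕ} (hmk : m ≤ k) :
    Function.Injective (bondMatrix k m *ᵥ ·) := by
  refine (injective_iff_map_eq_zero (bondMatrix k m).mulVecLin).mpr fun a ha => funext fun i => ?_
  -- `(B a)ᵢ = aᵢ + aᵢ₋₁`, so the coordinates of `a` vanish one after the other.
  induction i using WellFoundedLT.induction with
  | _ i ih =>
    have hi := congrFun ha (Fin.castLE hmk i)
    rw [mulVecLin_apply, mulVec, dotProduct, Finset.sum_eq_single i] at hi
    · simpa [bondMatrix] using hi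
    · intro l _ hli
      rcases lt_or_gt_of_ne hli with h | h
      · rw [ih l h, Pi.zero_apply, mul_zero]
      · have : ¬((i : ℕ) = l ∨ (i : ℕ) = l + 1) := by omega
        simp [bondMatrix, this]
    · simp

@[ext] structure CentralExt (m : ℕ) where
  sign : ZMod 2
  vec : Fin m → ZMod 2

namespace CentralExt

variable {m : ℕ}

def cocycle (a b : Fin m → ZMod 2) : ZMod 2 := a ⬝ᵥ (bondMatrix m m *ᵥ b)

@[simp] theorem cocycle_zero_left (b : Fin m → ZMod 2) : cocycle 0 b = 0 := zero_dotProduct _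

@[simp] theorem cocycle_zero_right (a : Fin m → ZMod 2) : cocycle a 0 = 0 := by
  rw [cocycle, mulVec_zero, dotProduct_zero]

theorem cocycle_single_single (i j : Fin m) :
    cocycle (Pi.single i 1) (Pi.single j 1) = if (i : ℕ) = j ∨ (i : ℕ) = j + 1 then 1 else 0 := by
  rw [cocycle, single_dotProduct, one_mul, bondMatrix_mulVec_single]

instance : One (CentralExt m) := ⟨⟨0, 0⟩⟩
instance : Mul (CentralExt m) := ⟨fun x y => ⟨x.sign + y.sign + cocycle x.vec y.vec, x.vec + y.vec⟩⟩
instance : Inv (CentralExt m) := ⟨fun x => ⟨x.sign + cocycle x.vec x.vec, x.vec⟩⟩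

@[simp] theorem one_sign : (1 : CentralExt m).sign = 0 := rfl
@[simp] theorem one_vec : (1 : CentralExt m).vec = 0 := rfl
@[simp] theorem mul_sign (x y : CentralExt m) :
    (x * y).sign = x.sign + y.sign + cocycle x.vec y.vec := rfl
@[simp] theorem mul_vec (x y : CentralExt m) : (x * y).vec = x.vec + y.vec := rfl

instance : Group (CentralExt m) where
  mul_assoc _ _ _ := by
    ext1
    · simp only [mul_sign, mul_vec, cocycle, add_dotProduct, mulVec_add, dotProduct_add]
      ring
    · exact add_assoc _ _ _
  one_mul _ := by ext1 <;> simp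
  mul_one _ := by ext1 <;> simp
  inv_mul_cancel x := by
    ext1
    · change x.sign + cocycle x.vec x.vec + x.sign + cocycle x.vec x.vec = 0
      generalize x.sign = s, cocycle x.vec x.vec = t
      revert s t; decide
    · exact pi_zmod_two_add_self x.vec

theorem card_eq : Nat.card (CentralExt m) = 2 ^ (m + 1) := by
  let e : CentralExt m ≃ ZMod 2 × (Fin m → ZMod 2) :=
    ⟨fun c => (c.sign, c.vec), fun p => ⟨p.1, p.2⟩, fun _ => rfl, fun _ => rfl⟩
  rw [Nat.card_congr e, Nat.card_prod, Nat.card_fun, Nat.card_zmod, Nat.card_fin, pow_succ']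

theorem closure_eq_top : Subgroup.closure
    (insert ⟨1, 0⟩ (Set.range fun i : Fin m => (⟨0, Pi.single i 1⟩ : CentralExt m))) = ⊤ := by
  set H := Subgroup.closure
    (insert ⟨1, 0⟩ (Set.range fun i : Fin m => (⟨0, Pi.single i 1⟩ : CentralExt m)))
  have central_mem (s : ZMod 2) : (⟨s, 0⟩ : CentralExt m) ∈ H := by
    rcases zmod_two_eq_zero_or_eq_one s with rfl | rfl
    · exact H.one_mem
    · exact Subgroup.subset_closure (Set.mem_insert _ _)
  let V : AddSubmonoid (Fin m → ZMod 2) :=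
    { carrier := {a | ∀ s, (⟨s, a⟩ : CentralExt m) ∈ H}
      zero_mem' := central_mem
      add_mem' := fun {a b} ha hb s => by
        convert H.mul_mem (ha (s + cocycle a b)) (hb 0) using 1
        ext1
        · simp only [mul_sign, add_zero, add_assoc, CharTwo.add_self_eq_zero]
        · rfl }
  have single_mem (i : Fin m) : Pi.single i 1 ∈ V := fun s => by
    convert H.mul_mem (central_mem s) (Subgroup.subset_closure (Set.mem_insert_of_mem _ ⟨i, rfl⟩))
      using 1
    ext1 <;> simp [cocycle]
  refine eq_top_iff.mpr fun c _ => ?_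
  have : c.vec ∈ V := by
    rw [← Finset.univ_sum_single c.vec]
    refine AddSubmonoid.sum_mem V fun i _ => ?_
    rcases zmod_two_eq_zero_or_eq_one (c.vec i) with h | h
    · rw [h, Pi.single_zero]; exact V.zero_mem
    · rw [h]; exact single_mem i
  exact this c.sign

def ofGen : Option (Fin m) → CentralExt m
  | none => ⟨1, 0⟩
  | some i => ⟨0, Pi.single i 1⟩

theorem lift_ofGen_eq_one : ∀ r ∈ Erel m (-1), FreeGroup.lift ofGen r = 1 := by
  rintro r ((((rfl | ⟨i, rfl⟩) | ⟨i, rfl⟩) | ⟨i, j, hij, rfl⟩) | ⟨i, j, hij, rfl⟩)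
  all_goals
    simp only [map_mul, map_inv, map_pow, FreeGroup.lift_apply_of, ← commutatorElement_def,
      map_commutatorElement, commutatorElement_eq_one_iff_commute, mul_inv_eq_one,
      apply_ite (FreeGroup.lift _), map_one]
  · ext1 <;> simp [ofGen, sq]; decide
  · ext1 <;> simp [ofGen, add_comm]
  · ext1 <;> simp [ofGen, sq, cocycle_single_single, pi_zmod_two_add_self]
  · ext1
    · simp only [ofGen, mul_sign, cocycle_single_single]
      rw [if_neg (by omega), if_neg (by omega)]
    · exact add_comm _ _
  · ext1
    · simp only [ofGen, mul_sign, mul_vec, zero_add, cocycle_single_single, cocycle_zero_left]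
      rw [if_pos (by omega), if_neg (by omega)]
      rfl
    · simp only [ofGen, mul_vec, zero_add]
      exact add_comm _ _

end CentralExt

theorem exists_surjective_of_commute_of_sq_eq_one {G ι : Type*} [Group G] [Fintype ι]
    (g : ι → G) (hgen : Subgroup.closure (Set.range g) = ⊤)
    (hcomm : ∀ i j, Commute (g i) (g j)) (hsq : ∀ i, g i ^ 2 = 1) :
    ∃ F : (ι → ZMod 2) → G, Function.Surjective F := by
  classical
  have hcentral := Subgroup.closure_le_centralizer_centralizer (Set.range g)
  rw [hgen] at hcentral
  let _ : CommGroup G :=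
    { mul_comm := fun a b =>
        Set.centralizer_centralizer_comm_of_comm (by rintro _ ⟨i, rfl⟩ _ ⟨j, rfl⟩; exact hcomm i j)
          a (hcentral trivial) b (hcentral trivial) }
  let F : Multiplicative (ι → ZMod 2) →* G :=
    { toFun := fun a => ∏ i, g i ^ (a.toAdd i).val
      map_one' := by simp
      map_mul' := fun a b => by
        simp only [← Finset.prod_mul_distrib, ← pow_add]
        refine Finset.prod_congr rfl fun i _ => ?_
        rw [toAdd_mul, Pi.add_apply, ZMod.val_add, ← pow_eq_pow_mod _ (hsq i)] }
  have hrange : Subgroup.closure (Set.range g) ≤ F.range := by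
    rw [Subgroup.closure_le]
    rintro _ ⟨i, rfl⟩
    refine ⟨Multiplicative.ofAdd (Pi.single i (1 : ZMod 2)), ?_⟩
    change ∏ j, g j ^ (Pi.single (M := fun _ => ZMod 2) i 1 j).val = g i
    rw [Finset.prod_eq_single i (fun j _ hji => by simp [hji]) (by simp), Pi.single_eq_same,
      ZMod.val_one, pow_one]
  rw [hgen] at hrange
  refine ⟨fun a => F (Multiplicative.ofAdd a), fun x => ?_⟩
  obtain ⟨a, rfl⟩ := hrange (Subgroup.mem_top x)
  exact ⟨a.toAdd, rfl⟩

section Presentation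

variable {m : ℕ} {ν : ℤˣ}

theorem neg1_sq : neg1 m ν ^ 2 = 1 := by
  have := PresentedGroup.one_of_mem (rels := Erel m ν) (Or.inl (Or.inl (Or.inl (Or.inl rfl))))
  rwa [map_pow] at this

theorem neg1_commute_xgen (i : Fin m) : Commute (neg1 m ν) (xgen m ν i) := by
  have := PresentedGroup.one_of_mem (rels := Erel m ν)
    (Or.inl (Or.inl (Or.inl (Or.inr ⟨i, rfl⟩))))
  simp only [map_mul, map_inv] at this
  exact commutatorElement_eq_one_iff_commute.mp this

theorem xgen_sq (i : Fin m) : xgen m ν i ^ 2 = if ν = 1 then 1 else neg1 m ν := by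
  have := PresentedGroup.one_of_mem (rels := Erel m ν) (Or.inl (Or.inl (Or.inr ⟨i, rfl⟩)))
  rw [map_mul, map_inv, map_pow, mul_inv_eq_one, apply_ite (PresentedGroup.mk _), map_one] at this
  exact this

theorem xgen_commute_of_add_two_le {i j : Fin m} (hij : (i : ℕ) + 2 ≤ j) :
    Commute (xgen m ν i) (xgen m ν j) := by
  have := PresentedGroup.one_of_mem (rels := Erel m ν) (Or.inl (Or.inr ⟨i, j, hij, rfl⟩))
  simp only [map_mul, map_inv] at this
  exact commutatorElement_eq_one_iff_commute.mp this

theorem xgen_mul_xgen_of_eq_succ {i j : Fin m} (hij : (j : ℕ) = i + 1) :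
    xgen m ν j * xgen m ν i = neg1 m ν * xgen m ν i * xgen m ν j := by
  have := PresentedGroup.one_of_mem (rels := Erel m ν) (Or.inr ⟨i, j, hij, rfl⟩)
  simp only [map_mul, map_inv] at this
  exact mul_inv_eq_one.mp this

theorem neg1_mem_center : neg1 m ν ∈ Subgroup.center (Egrp m ν) := by
  have h : Subgroup.closure (Set.range PresentedGroup.of) ≤ Subgroup.centralizer {neg1 m ν} := by
    rw [Subgroup.closure_le]
    rintro _ ⟨_ | i, rfl⟩
    · exact Subgroup.mem_centralizer_singleton_iff.mpr rfl
    · exact Subgroup.mem_centralizer_singleton_iff.mpr (neg1_commute_xgen i).symm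
  rw [PresentedGroup.closure_range_of] at h
  exact Subgroup.mem_center_iff.mpr fun g => Subgroup.mem_centralizer_singleton_iff.mp (h trivial)

instance : (Subgroup.zpowers (neg1 m ν)).Normal :=
  ⟨fun n hn g => by
    rw [Subgroup.mem_center_iff.mp (Subgroup.zpowers_le.mpr neg1_mem_center hn) g,
      mul_inv_cancel_right]
    exact hn⟩

theorem mk_neg1_eq_one : ((neg1 m ν : Egrp m ν) : Egrp m ν ⧸ Subgroup.zpowers (neg1 m ν)) = 1 :=
  (QuotientGroup.eq_one_iff _).mpr (Subgroup.mem_zpowers _)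

theorem closure_range_mk_xgen :
    Subgroup.closure (Set.range fun i => (xgen m ν i : Egrp m ν ⧸ Subgroup.zpowers (neg1 m ν)))
      = ⊤ := by
  set N := Subgroup.zpowers (neg1 m ν)
  have hgen : Subgroup.closure (Set.range (QuotientGroup.mk' N ∘ PresentedGroup.of)) = ⊤ := by
    rw [Set.range_comp, ← MonoidHom.map_closure, PresentedGroup.closure_range_of,
      ← MonoidHom.range_eq_map, MonoidHom.range_eq_top]
    exact QuotientGroup.mk'_surjective N
  refine eq_top_iff.mpr (hgen ▸ Subgroup.closure_le _ |>.mpr ?_)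
  rintro _ ⟨_ | i, rfl⟩
  · change ((neg1 m ν : Egrp m ν) : Egrp m ν ⧸ N) ∈ _
    rw [mk_neg1_eq_one]
    exact Subgroup.one_mem _
  · exact Subgroup.subset_closure ⟨i, rfl⟩

theorem commute_mk_xgen (i j : Fin m) :
    Commute (xgen m ν i : Egrp m ν ⧸ Subgroup.zpowers (neg1 m ν)) (xgen m ν j) := by
  have adjacent {i j : Fin m} (hij : (j : ℕ) = i + 1) :
      (xgen m ν j * xgen m ν i : Egrp m ν ⧸ Subgroup.zpowers (neg1 m ν)) =
        xgen m ν i * xgen m ν j := by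
    have := congrArg (QuotientGroup.mk' (Subgroup.zpowers (neg1 m ν)))
      (xgen_mul_xgen_of_eq_succ (ν := ν) hij)
    simpa only [map_mul, QuotientGroup.mk'_apply, mk_neg1_eq_one, one_mul] using this
  obtain h | h | h | h | h : (i : ℕ) + 2 ≤ j ∨ (j : ℕ) = i + 1 ∨ i = j ∨ (i : ℕ) = j + 1 ∨
      (j : ℕ) + 2 ≤ i := by omega
  · exact (xgen_commute_of_add_two_le h).map (QuotientGroup.mk' _)
  · exact (adjacent h).symm
  · rw [h]
  · exact adjacent h
  · exact ((xgen_commute_of_add_two_le h).map (QuotientGroup.mk' _)).symm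

theorem mk_xgen_sq (i : Fin m) :
    (xgen m ν i : Egrp m ν ⧸ Subgroup.zpowers (neg1 m ν)) ^ 2 = 1 := by
  rw [← QuotientGroup.mk_pow, xgen_sq]
  split_ifs
  · rfl
  · exact mk_neg1_eq_one

theorem exists_surjective_quotient_zpowers_neg1 :
    ∃ F : (Fin m → ZMod 2) → Egrp m ν ⧸ Subgroup.zpowers (neg1 m ν), Function.Surjective F :=
  exists_surjective_of_commute_of_sq_eq_one _ closure_range_mk_xgen commute_mk_xgen mk_xgen_sq

instance : Finite (Egrp m ν ⧸ Subgroup.zpowers (neg1 m ν)) :=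
  let ⟨_, hF⟩ := exists_surjective_quotient_zpowers_neg1 (m := m) (ν := ν)
  Finite.of_surjective _ hF

theorem card_quotient_zpowers_neg1_le :
    Nat.card (Egrp m ν ⧸ Subgroup.zpowers (neg1 m ν)) ≤ 2 ^ m := by
  obtain ⟨F, hF⟩ := exists_surjective_quotient_zpowers_neg1 (m := m) (ν := ν)
  simpa [Nat.card_fun] using Nat.card_le_card_of_surjective F hF

theorem card_Egrp_eq : Nat.card (Egrp m ν) =
    Nat.card (Egrp m ν ⧸ Subgroup.zpowers (neg1 m ν)) * orderOf (neg1 m ν) := by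
  rw [Subgroup.card_eq_card_quotient_mul_card_subgroup (Subgroup.zpowers _), Nat.card_zpowers]

instance : Finite (Egrp m ν) :=
  Nat.finite_of_card_ne_zero <| by
    rw [card_Egrp_eq]
    exact mul_ne_zero Nat.card_pos.ne'
      (isOfFinOrder_iff_pow_eq_one.mpr ⟨2, two_pos, neg1_sq⟩).orderOf_pos.ne'

theorem card_Egrp_le : Nat.card (Egrp m ν) ≤ 2 ^ (m + 1) := by
  rw [card_Egrp_eq, pow_succ]
  exact Nat.mul_le_mul card_quotient_zpowers_neg1_le (orderOf_le_of_pow_eq_one two_pos neg1_sq)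

end Presentation

namespace Egrp

def toCentralExt (m : ℕ) : Egrp m (-1) →* CentralExt m :=
  PresentedGroup.toGroup CentralExt.lift_ofGen_eq_one

theorem toCentralExt_xgen {m : ℕ} (i : Fin m) :
    toCentralExt m (xgen m (-1) i) = ⟨0, Pi.single i 1⟩ :=
  PresentedGroup.toGroup.of _

theorem toCentralExt_surjective (m : ℕ) : Function.Surjective (toCentralExt m) := by
  rw [← MonoidHom.range_eq_top, eq_top_iff, ← CentralExt.closure_eq_top, Subgroup.closure_le]
  rintro _ (rfl | ⟨i, rfl⟩)
  · exact ⟨neg1 m (-1), PresentedGroup.toGroup.of _⟩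
  · exact ⟨xgen m (-1) i, PresentedGroup.toGroup.of _⟩

theorem toCentralExt_bijective (m : ℕ) : Function.Bijective (toCentralExt m) :=
  (toCentralExt_surjective m).bijective_of_nat_card_le
    (card_Egrp_le.trans_eq CentralExt.card_eq.symm)

end Egrp

theorem R4_mul_R4 : R4 * R4 = !![0, 0, 0, 1; 0, 0, -1, 0; 0, 1, 0, 0; -1, 0, 0, 0] := by
  have hsqrt : ((Real.sqrt 2 : ℝ) : ℂ)⁻¹ * ((Real.sqrt 2 : ℝ) : ℂ)⁻¹ = 2⁻¹ := by
    rw [← mul_inv, ← Complex.ofReal_mul, Real.mul_self_sqrt zero_le_two, Complex.ofReal_ofNat]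
  rw [R4, Matrix.smul_mul, Matrix.mul_smul, smul_smul, hsqrt]
  ext i j
  fin_cases i <;> fin_cases j <;> simp <;> norm_num

theorem R_eq_submatrix : R = R4.submatrix ((Equiv.prodComm _ _).trans finProdFinEquiv)
    ((Equiv.prodComm _ _).trans finProdFinEquiv) := rfl

theorem R_mul_R_apply (p q : Fin 2 × Fin 2) :
    (R * R) p q = if p.1 ≠ q.1 ∧ p.2 ≠ q.2 then (-1) ^ (1 + ZMod.finEquiv 2 q.1).val else 0 := by
  rw [R_eq_submatrix, submatrix_mul_equiv, R4_mul_R4]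
  obtain ⟨a, b⟩ := p
  obtain ⟨c, d⟩ := q
  fin_cases a <;> fin_cases b <;> fin_cases c <;> fin_cases d <;>
    simp [finProdFinEquiv, ZMod.val_one] <;> rfl

theorem pairOp_apply {n i : ℕ} (h : i + 1 < n) (M : Matrix (Fin 2 × Fin 2) (Fin 2 × Fin 2) ℂ)
    (x y : Fin n → Fin 2) :
    pairOp n i M x y = M (x ⟨i, by omega⟩, x ⟨i + 1, h⟩) (y ⟨i, by omega⟩, y ⟨i + 1, h⟩) *
      ∏ j : Fin n, if (j : ℕ) = i ∨ (j : ℕ) = i + 1 then 1 else if x j = y j then 1 else 0 := by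
  unfold pairOp
  -- `rw [dif_pos h]` fails here: the `dite` is applied to `x y` although its type is `Matrix`.
  exact (congrFun (congrFun (dif_pos h) x) y).trans rfl

def finTwoVecEquiv (n : ℕ) : (Fin n → Fin 2) ≃ (Fin n → ZMod 2) :=
  Equiv.piCongrRight fun _ => (ZMod.finEquiv 2).toEquiv

theorem finEquiv_eq_add_ite_iff (a b : Fin 2) (P : Prop) [Decidable P] :
    ZMod.finEquiv 2 a = ZMod.finEquiv 2 b + (if P then 1 else 0) ↔ if P then a ≠ b else a = b := by
  split_ifs <;> revert a b <;> decide

theorem finTwoVecEquiv_eq_add_bondMatrix_single_iff {n : ℕ} (i : Fin (n - 1))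
    (x y : Fin n → Fin 2) :
    finTwoVecEquiv n x = finTwoVecEquiv n y + bondMatrix n (n - 1) *ᵥ Pi.single i 1 ↔
      (x ⟨i, by omega⟩ ≠ y ⟨i, by omega⟩ ∧ x ⟨i + 1, by omega⟩ ≠ y ⟨i + 1, by omega⟩) ∧
        ∀ j : Fin n, ((j : ℕ) = i ∨ (j : ℕ) = i + 1) ∨ x j = y j := by
  simp only [funext_iff, Pi.add_apply, bondMatrix_mulVec_single]
  refine (forall_congr' fun j => finEquiv_eq_add_ite_iff _ _ _).trans ⟨fun h => ?_, ?_⟩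
  · have h₀ := h ⟨i, by omega⟩
    have h₁ := h ⟨i + 1, by omega⟩
    rw [if_pos (Or.inl rfl)] at h₀
    rw [if_pos (Or.inr rfl)] at h₁
    refine ⟨⟨h₀, h₁⟩, fun j => ?_⟩
    have := h j
    split_ifs at this with hj
    exacts [Or.inl hj, Or.inr this]
  · rintro ⟨⟨h₀, h₁⟩, h⟩ j
    split_ifs with hj
    · rcases hj with hj | hj
      · rwa [show j = ⟨i, by omega⟩ from Fin.ext hj]
      · rwa [show j = ⟨i + 1, by omega⟩ from Fin.ext hj]
    · exact (h j).resolve_left hj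

namespace CentralExt

variable {n : ℕ}

-- Each bond `i` in the support of `c.vec` contributes the sign `(-1)^(1 + yᵢ)` of `R²`.
def phase (c : CentralExt (n - 1)) (y : Fin n → ZMod 2) : ZMod 2 :=
  c.sign + c.vec ⬝ᵥ (1 + y ∘ Fin.castLE (Nat.sub_le n 1))

theorem phase_add (c c' : CentralExt (n - 1)) (y : Fin n → ZMod 2) :
    phase c (y + bondMatrix n (n - 1) *ᵥ c'.vec) + phase c' y = phase (c * c') y := by
  have hcocycle : c.vec ⬝ᵥ ((bondMatrix n (n - 1) *ᵥ c'.vec) ∘ Fin.castLE (Nat.sub_le n 1)) =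
      cocycle c.vec c'.vec := rfl
  simp only [phase, Pi.add_comp, dotProduct_add, add_dotProduct, mul_sign, mul_vec, hcocycle]
  ring

theorem phase_single (i : Fin (n - 1)) (y : Fin n → ZMod 2) :
    phase ⟨0, Pi.single i 1⟩ y = 1 + y (Fin.castLE (Nat.sub_le n 1) i) := by
  rw [phase, single_dotProduct, zero_add, one_mul]
  rfl

def signedShift (c : CentralExt (n - 1)) : Matrix (Fin n → ZMod 2) (Fin n → ZMod 2) ℂ :=
  Matrix.of fun x y => if x = y + bondMatrix n (n - 1) *ᵥ c.vec then (-1) ^ (phase c y).val else 0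

theorem signedShift_mul (c c' : CentralExt (n - 1)) :
    signedShift c * signedShift c' = signedShift (c * c') := by
  ext x z
  rw [mul_apply, Finset.sum_eq_single (z + bondMatrix n (n - 1) *ᵥ c'.vec)]
  · simp only [signedShift, of_apply]
    rw [mul_vec, mulVec_add, add_comm (bondMatrix n (n - 1) *ᵥ c.vec), ← add_assoc]
    split_ifs
    · rw [← neg_one_pow_val_add, phase_add]
    · rw [zero_mul]
  · intro y _ hy
    simp [signedShift, hy]
  · simp

theorem signedShift_one : signedShift (1 : CentralExt (n - 1)) = 1 := by
  ext x y
  simp [signedShift, phase, one_apply]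

def signedShiftHom : CentralExt (n - 1) →* Matrix (Fin n → ZMod 2) (Fin n → ZMod 2) ℂ where
  toFun := signedShift
  map_one' := signedShift_one
  map_mul' c c' := (signedShift_mul c c').symm

theorem signedShiftHom_injective : Function.Injective (signedShiftHom (n := n)) := by
  refine (injective_iff_map_eq_one _).mpr fun c hc => ?_
  have entry (x y : Fin n → ZMod 2) : signedShift c x y = (1 : Matrix _ _ ℂ) x y :=
    congrFun (congrFun hc x) y
  have hshift : bondMatrix n (n - 1) *ᵥ c.vec = 0 := by
    by_contra hne
    have := entry (bondMatrix n (n - 1) *ᵥ c.vec) 0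
    rw [one_apply_ne hne] at this
    simp [signedShift] at this
  have hvec : c.vec = 0 :=
    bondMatrix_mulVec_injective (Nat.sub_le n 1) (hshift.trans (mulVec_zero _).symm)
  have := entry 0 0
  rw [signedShift, of_apply, hshift, add_zero, if_pos rfl, one_apply_eq, phase, hvec,
    zero_dotProduct, add_zero, neg_one_pow_val_eq_one_iff] at this
  exact CentralExt.ext this hvec

noncomputable def signedShiftRepr (n : ℕ) :
    CentralExt (n - 1) →* Matrix (Fin n → Fin 2) (Fin n → Fin 2) ℂ :=
  ((reindexAlgEquiv ℂ ℂ (finTwoVecEquiv n).symm : _ ≃ₐ[ℂ] _) : _ →* _).comp signedShiftHom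

theorem signedShiftRepr_injective : Function.Injective (signedShiftRepr n) :=
  (reindexAlgEquiv ℂ ℂ (finTwoVecEquiv n).symm).injective.comp signedShiftHom_injective

theorem signedShiftRepr_single (i : Fin (n - 1)) :
    signedShiftRepr n ⟨0, Pi.single i 1⟩ = gMat n i := by
  ext x y
  rw [gMat, pairOp_apply (by omega), R_mul_R_apply]
  simp only [signedShiftRepr, MonoidHom.comp_apply, MonoidHom.coe_coe, coe_reindexAlgEquiv,
    reindex_apply, Equiv.symm_symm, submatrix_apply, signedShiftHom, MonoidHom.coe_mk,
    OneHom.coe_mk, signedShift, of_apply, ← ite_or, Finset.prod_boole, Finset.mem_univ,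
    forall_const, ite_zero_mul_ite_zero, mul_one]
  exact if_congr (finTwoVecEquiv_eq_add_bondMatrix_single_iff i x y) (by rw [phase_single]; rfl) rfl

end CentralExt

/-- the map `φ : E_{n−1}^{−1} → GL(2ⁿ, ℂ)` sending `xᵢ` to
`gᵢ = I₂^{⊗(i−1)}⊗R²⊗I₂^{⊗(n−i−1)}` is an injective group homomorphism; in
particular the group generated by `g₁, …, g_{n−1}` (= the range of `φ`) is
isomorphic to `E_{n−1}^{−1}` and has order `2ⁿ`. -/
theorem stmt18 (n : ℕ) (hn : 2 ≤ n) :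
    ∃ φ : Egrp (n - 1) (-1) →* (Matrix (Fin n → Fin 2) (Fin n → Fin 2) ℂ)ˣ,
      (∀ i : Fin (n - 1),
        (φ (xgen (n - 1) (-1) i) : Matrix (Fin n → Fin 2) (Fin n → Fin 2) ℂ) =
          gMat n (i : ℕ)) ∧
      Function.Injective φ ∧
      Nat.card φ.range = 2 ^ n := by
  have hbij := Egrp.toCentralExt_bijective (n - 1)
  set φ := (CentralExt.signedShiftRepr n).toHomUnits.comp (Egrp.toCentralExt (n - 1))
  have hφ : Function.Injective φ := fun a b h =>
    hbij.1 (CentralExt.signedShiftRepr_injective (congrArg Units.val h))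
  refine ⟨φ, fun i => ?_, hφ, ?_⟩
  · change CentralExt.signedShiftRepr n (Egrp.toCentralExt (n - 1) (xgen (n - 1) (-1) i)) = _
    rw [Egrp.toCentralExt_xgen, CentralExt.signedShiftRepr_single]
  · rw [← Nat.card_congr (MonoidHom.ofInjective hφ).toEquiv, Nat.card_eq_of_bijective _ hbij,
      CentralExt.card_eq, Nat.sub_add_cancel (by omega)]
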